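/- arXiv:1601.01325 — 8 statements merged into one kernel-verified Lean document; each statement's English description precedes it below -/
import Mathlib

section
/- Let x1,…,xn > 0, let ξ1,…,ξn be independent with ξi exponential of rate xi, and let π be the random permutation such that ξ_{π1} < ξ_{π2} < … < ξ_{πn} a.s. Then for any fixed permutation τ, P(π = τ) = ∏_{i=1}^{n-1} x_{τi} / (∑_{j=i}^{n} x_{τj}). -/
open MeasureTheory ProbabilityTheory Real Finset

/-!
After relabelling by `τ` it suffices to show that independent exponentials with rates
`a 0, …, a (n-1)` come out in increasing order with probability `∏ i, a i / ∑ j ≥ i, a j`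
(the factor for `i = n - 1` is `1`). Induction needs a stronger statement, with a level `c ≥ 0`:
`P(increasing, all > c) = exp (-(∑ a) c) ∏ i, a i / ∑ j ≥ i, a j`. Given that the first variable
equals `t > c`, the others must be increasing and above `t`, which by induction has probability
`exp (-(∑ j > 0, a j) t) · ∏ …`; integrating this against the density `a 0 · exp (-a 0 t)` over
`t > c` produces the factor `a 0 / ∑ a` and `exp (-(∑ a) c)`. Since exponentials are a.s.
positive, `c = 0` gives the claim.
-/

lemma measurableSet_setOf_strictMono {ι α : Type*} [Preorder ι] [Countable ι] [LinearOrder α]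
    [TopologicalSpace α] [OrderClosedTopology α] [SecondCountableTopology α] [MeasurableSpace α]
    [OpensMeasurableSpace α] :
    MeasurableSet {y : ι → α | StrictMono y} := by
  simp only [StrictMono, Set.ofPred_forall]
  exact .iInter fun i => .iInter fun j => .iInter fun _ =>
    measurableSet_lt (measurable_pi_apply i) (measurable_pi_apply j)

lemma expMeasure_eq_withDensity (r : ℝ) :
    expMeasure r = volume.withDensity (exponentialPDF r) := rfl

lemma ae_pos_expMeasure (r : ℝ) : ∀ᵐ t ∂expMeasure r, 0 < t := by
  have hneg : {t : ℝ | ¬0 < t} = Set.Iic 0 := by ext; simp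
  rw [ae_iff, hneg, expMeasure_eq_withDensity, withDensity_apply _ measurableSet_Iic,
    setLIntegral_congr Iio_ae_eq_Iic.symm]
  exact lintegral_exponentialPDF_of_nonpos le_rfl

lemma setLIntegral_Ioi_exp_neg_mul_expMeasure {r s c : ℝ} (hr : 0 < r) (hs : 0 ≤ s)
    (hc : 0 ≤ c) :
    ∫⁻ t in Set.Ioi c, ENNReal.ofReal (exp (-(s * t))) ∂expMeasure r
      = ENNReal.ofReal (r / (r + s) * exp (-((r + s) * c))) := by
  have hrs : 0 < r + s := by linarith
  rw [expMeasure_eq_withDensity, restrict_withDensity measurableSet_Ioi,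
    lintegral_withDensity_eq_lintegral_mul _
      (show Measurable (exponentialPDF r) from (measurable_exponentialPDFReal r).ennreal_ofReal)
      (by fun_prop)]
  have hdensity : Set.EqOn (exponentialPDF r * fun t => ENNReal.ofReal (exp (-(s * t))))
      (fun t => ENNReal.ofReal (r * exp (-(r + s) * t))) (Set.Ioi c) := fun t ht => by
    rw [Pi.mul_apply, exponentialPDF_of_nonneg (hc.trans (le_of_lt ht)),
      ← ENNReal.ofReal_mul (by positivity), mul_assoc, ← exp_add]
    ring_nf
  rw [setLIntegral_congr_fun measurableSet_Ioi hdensity, ← ofReal_integral_eq_lintegral_ofReal,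
    integral_const_mul, integral_exp_mul_Ioi (by linarith)]
  · rw [neg_div_neg_eq, neg_mul]
    ring_nf
  · exact (integrableOn_exp_mul_Ioi (by linarith) c).const_mul r
  · exact .of_forall fun t => by positivity

lemma Fin.cons_mem_setOf_strictMono_gt_iff {n : ℕ} {c t : ℝ} {z : Fin n → ℝ} :
    Fin.cons t z ∈ {y : Fin (n + 1) → ℝ | StrictMono y ∧ ∀ i, c < y i} ↔
      c < t ∧ z ∈ {y : Fin n → ℝ | StrictMono y ∧ ∀ i, t < y i} := by
  simp only [Set.mem_ofPred_eq, Fin.strictMono_cons, Fin.forall_fin_succ, Fin.cons_zero,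
    Fin.cons_succ]
  exact ⟨fun ⟨⟨htz, hz⟩, hct, _⟩ => ⟨hct, hz, htz⟩,
    fun ⟨hct, hz, htz⟩ => ⟨⟨htz, hz⟩, hct, fun i => hct.trans (htz i)⟩⟩

lemma pi_expMeasure_setOf_strictMono_gt {n : ℕ} (a : Fin n → ℝ) (ha : ∀ i, 0 < a i) {c : ℝ}
    (hc : 0 ≤ c) :
    Measure.pi (fun i => expMeasure (a i)) {y | StrictMono y ∧ ∀ i, c < y i}
      = ENNReal.ofReal (exp (-((∑ i, a i) * c)) * ∏ i, a i / ∑ j ∈ Ici i, a j) := by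
  have hprob := fun i => isProbabilityMeasure_expMeasure (ha i)
  induction n generalizing c with
  | zero => simp [Subsingleton.strictMono]
  | succ n ih =>
    let e := MeasurableEquiv.piFinSuccAbove (fun _ : Fin (n + 1) => ℝ) 0
    have hmp := (measurePreserving_piFinSuccAbove (fun i => expMeasure (a i)) 0).symm
    simp only [Fin.zero_succAbove] at hmp
    have hS : MeasurableSet {y : Fin (n + 1) → ℝ | StrictMono y ∧ ∀ i, c < y i} := by
      simp only [Set.ofPred_and, Set.ofPred_forall]
      exact measurableSet_setOf_strictMono.inter
        (.iInter fun i => measurableSet_lt measurable_const (measurable_pi_apply i))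
    rw [← hmp.measure_preimage_equiv, Measure.prod_apply (e.symm.measurable hS)]
    have hslice (t : ℝ) : Prod.mk t ⁻¹' (e.symm ⁻¹' {y | StrictMono y ∧ ∀ i, c < y i}) =
        {z | c < t ∧ z ∈ {y : Fin n → ℝ | StrictMono y ∧ ∀ i, t < y i}} := by
      ext z
      have he : e.symm (t, z) = Fin.cons t z := by simp [e]; rfl
      rw [Set.mem_preimage, Set.mem_preimage, he]
      exact Fin.cons_mem_setOf_strictMono_gt_iff
    have hsliceMeasure (t : ℝ) :
        (Measure.pi fun j : Fin n => expMeasure (a j.succ))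
          {z | c < t ∧ z ∈ {y : Fin n → ℝ | StrictMono y ∧ ∀ i, t < y i}} =
        (Set.Ioi c).indicator (fun u => ENNReal.ofReal (exp (-((∑ i : Fin n, a i.succ) * u))) *
          ENNReal.ofReal (∏ i : Fin n, a i.succ / ∑ j ∈ Ici i, a j.succ)) t := by
      by_cases hct : c < t
      · simp only [hct, true_and, Set.ofPred_mem_eq, Set.indicator_of_mem (Set.mem_Ioi.2 hct)]
        rw [ih _ (fun i => ha i.succ) (hc.trans hct.le) (fun i => hprob i.succ),
          ENNReal.ofReal_mul (exp_pos _).le]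
      · simp [hct]
    simp only [hslice, hsliceMeasure]
    have hs : 0 ≤ ∑ i : Fin n, a i.succ := sum_nonneg fun i _ => (ha i.succ).le
    rw [lintegral_indicator measurableSet_Ioi, lintegral_mul_const _ (by fun_prop),
      setLIntegral_Ioi_exp_neg_mul_expMeasure (ha 0) hs hc, ← ENNReal.ofReal_mul
        (mul_nonneg (div_nonneg (ha 0).le (add_nonneg (ha 0).le hs)) (exp_pos _).le),
      Fin.prod_univ_succ, Ici_zero_eq_univ, Fin.sum_univ_succ]
    simp only [Fin.sum_Ici_succ]
    congr 1
    ring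

lemma pi_expMeasure_setOf_strictMono {n : ℕ} (a : Fin n → ℝ) (ha : ∀ i, 0 < a i) :
    Measure.pi (fun i => expMeasure (a i)) {y | StrictMono y}
      = ENNReal.ofReal (∏ i, a i / ∑ j ∈ Ici i, a j) := by
  have := fun i => isProbabilityMeasure_expMeasure (ha i)
  have hpos : ∀ᵐ y ∂Measure.pi (fun i => expMeasure (a i)), ∀ i, 0 < y i :=
    ae_all_iff.2 fun i => Measure.tendsto_eval_ae_ae.eventually (ae_pos_expMeasure (a i))
  have hae : {y : Fin n → ℝ | StrictMono y}
      =ᵐ[Measure.pi fun i => expMeasure (a i)] {y | StrictMono y ∧ ∀ i, 0 < y i} := by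
    filter_upwards [hpos] with y hy
    exact propext (and_iff_left hy).symm
  rw [measure_congr hae, pi_expMeasure_setOf_strictMono_gt a ha le_rfl, mul_zero, neg_zero,
    exp_zero, one_mul]

lemma prod_div_sum_Ici_eq_prod_filter {n : ℕ} (a : Fin n → ℝ) (ha : ∀ i, a i ≠ 0) :
    ∏ i, a i / ∑ j ∈ Ici i, a j
      = ∏ i ∈ univ.filter (fun i : Fin n => (i : ℕ) + 1 < n), a i / ∑ j ∈ Ici i, a j := by
  refine (prod_subset (filter_subset _ _) fun i _ hi => ?_).symm
  have hlast : Ici i = {i} := by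
    ext j
    simp only [mem_filter, mem_univ, true_and, not_lt] at hi
    simp only [mem_Ici, mem_singleton]
    omega
  rw [hlast, sum_singleton, div_self (ha i)]

/-- Size-biased ordering formula: for independent exponentials `ξ i ~ Exp (x i)`,
the probability that the increasing ordering of the `ξ`s is given by the
permutation `τ` equals `∏_{i=1}^{n-1} x (τ i) / ∑_{j=i}^{n} x (τ j)`. -/
theorem stmt2 {Ω : Type*} [MeasurableSpace Ω] (P : Measure Ω) [IsProbabilityMeasure P]
    (n : ℕ) (x : Fin n → ℝ) (hx : ∀ i, 0 < x i)
    (ξ : Fin n → Ω → ℝ) (hm : ∀ i, Measurable (ξ i))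
    (hl : ∀ i, Measure.map (ξ i) P = expMeasure (x i))
    (hindep : iIndepFun ξ P)
    (τ : Equiv.Perm (Fin n)) :
    P {ω | ∀ i j : Fin n, i < j → ξ (τ i) ω < ξ (τ j) ω} =
      ENNReal.ofReal
        (∏ i ∈ Finset.univ.filter (fun i : Fin n => (i : ℕ) + 1 < n),
          x (τ i) / ∑ j ∈ Finset.univ.filter (fun j : Fin n => i ≤ j), x (τ j)) := by
  have hζ : Measurable fun ω i => ξ (τ i) ω := measurable_pi_lambda _ fun i => hm (τ i)
  have hlaw : P.map (fun ω i => ξ (τ i) ω) = Measure.pi fun i => expMeasure (x (τ i)) := by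
    rw [(iIndepFun_iff_map_fun_eq_pi_map fun i => (hm (τ i)).aemeasurable).1
      (hindep.precomp τ.injective)]
    simp only [hl]
  calc P {ω | ∀ i j : Fin n, i < j → ξ (τ i) ω < ξ (τ j) ω}
      = P.map (fun ω i => ξ (τ i) ω) {y | StrictMono y} :=
        (Measure.map_apply hζ measurableSet_setOf_strictMono).symm
    _ = ENNReal.ofReal (∏ i, x (τ i) / ∑ j ∈ Ici i, x (τ j)) := by
        rw [hlaw, pi_expMeasure_setOf_strictMono _ fun i => hx (τ i)]
    _ = _ := by
        simp only [prod_div_sum_Ici_eq_prod_filter _ fun i => (hx (τ i)).ne', filter_le_eq_Ici]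
end

section
/- Let c = (c1, c2, …) be a nonincreasing nonnegative sequence. The process V^c(s) = ∑_j (cj·1{ξj ≤ s} - cj²·s), with ξj independent Exp(cj), is well-defined (the series converges a.s. uniformly on compacts, e.g. in L²) if ∑_j cj³ < ∞. More precisely, for fixed s ≥ 0, ∑_j Var(cj·1{ξj ≤ s}) ≤ s·∑_j cj³, so the centered series converges in L². -/
open Real

theorem aux_term_bounds (c s : ℝ) (hc : 0 ≤ c) (hs : 0 ≤ s) :
    0 ≤ c ^ 2 * ((1 - Real.exp (-(c * s))) * Real.exp (-(c * s))) ∧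
    c ^ 2 * ((1 - Real.exp (-(c * s))) * Real.exp (-(c * s))) ≤ c ^ 3 * s := by
  have hx : 0 ≤ c * s := mul_nonneg hc hs
  have he1 : Real.exp (-(c * s)) ≤ 1 := Real.exp_le_one_iff.mpr (by linarith)
  have he0 : (0:ℝ) < Real.exp (-(c * s)) := Real.exp_pos _
  have hle : 1 - Real.exp (-(c * s)) ≤ c * s := by
    have := Real.add_one_le_exp (-(c * s))
    nlinarith
  have h1e : 0 ≤ 1 - Real.exp (-(c * s)) := by linarith
  constructor
  · exact mul_nonneg (sq_nonneg c) (mul_nonneg h1e he0.le)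
  · have : (1 - Real.exp (-(c * s))) * Real.exp (-(c * s)) ≤ (c * s) * 1 :=
      mul_le_mul hle he1 he0.le hx
    calc c ^ 2 * ((1 - Real.exp (-(c * s))) * Real.exp (-(c * s)))
        ≤ c ^ 2 * ((c * s) * 1) := by gcongr
      _ = c ^ 3 * s := by ring

/-- `l³` summability of `c` guarantees `L²` convergence of the compensated jump
series defining `V^c`: for fixed `s ≥ 0`, the sum of the variances
`Var (c j * 1{ξ j ≤ s}) = c j ^ 2 * (1 - exp (-c j s)) * exp (-c j s)` is finite
and bounded by `s * ∑ c j ^ 3`. -/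
theorem stmt10 (c : ℕ → ℝ) (hc : ∀ j, 0 ≤ c j) (hmono : Antitone c)
    (h3 : Summable (fun j => c j ^ 3)) (s : ℝ) (hs : 0 ≤ s) :
    Summable (fun j => c j ^ 2 * ((1 - Real.exp (-(c j * s))) * Real.exp (-(c j * s)))) ∧
    (∑' j, c j ^ 2 * ((1 - Real.exp (-(c j * s))) * Real.exp (-(c j * s)))) ≤
      s * ∑' j, c j ^ 3 := by
  have hb := fun j => aux_term_bounds (c j) s (hc j) hs
  have hS : Summable (fun j => c j ^ 3 * s) := h3.mul_right s
  have hsum : Summable (fun j => c j ^ 2 * ((1 - Real.exp (-(c j * s))) * Real.exp (-(c j * s)))) :=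
    Summable.of_nonneg_of_le (fun j => (hb j).1) (fun j => (hb j).2) hS
  refine ⟨hsum, ?_⟩
  calc (∑' j, c j ^ 2 * ((1 - Real.exp (-(c j * s))) * Real.exp (-(c j * s))))
      ≤ ∑' j, c j ^ 3 * s := Summable.tsum_le_tsum (fun j => (hb j).2) hsum hS
    _ = (∑' j, c j ^ 3) * s := tsum_mul_right
    _ = s * ∑' j, c j ^ 3 := mul_comm _ _
end

section
/- Let ξ1, ξ2 be independent with ξi ~ Exp(xi), xi > 0, and s > 0. On the event {ξ1 < ξ2 ≤ ξ1 + s·x1} ∪ {ξ2 < ξ1 ≤ ξ2 + s·x2} (the two blocks merge by time s in Uribe's diagram, n = 2 case), the minimum ξ12 := ξ1 ∧ ξ2 satisfies: the conditional law of ξ12 given this event is Exp(x1 + x2). Equivalently, P(ξ1 ∧ ξ2 ∈ dv, merger by time s) = (x1+x2)e^{-(x1+x2)v} dv · (1 - e^{-x1 x2 s}). -/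
/-!
Map `(ξ1, ξ2)` to the product law `Exp(x1) ⊗ Exp(x2)` and split the merger event according
to which clock rings first. If block 1 rings first at time `t > v`, block 2 must ring in
`(t, t + s x1]`, which has probability `e^{-x2 t} (1 - e^{-x1 x2 s})`; integrating against
`x1 e^{-x1 t} dt` over `t > v` gives `x1 / (x1 + x2) · e^{-(x1 + x2) v} (1 - e^{-x1 x2 s})`.
The symmetric piece contributes the same with weight `x2 / (x1 + x2)`, and the weights add to one.
-/

open MeasureTheory ProbabilityTheory Real Set

lemma Real.one_sub_exp_neg_nonneg {x : ℝ} (hx : 0 ≤ x) : 0 ≤ 1 - exp (-x) :=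
  sub_nonneg.2 (exp_le_one_iff.2 (neg_nonpos.2 hx))

namespace ProbabilityTheory

lemma expMeasure_eq_withDensity (r : ℝ) :
    expMeasure r = volume.withDensity (exponentialPDF r) := rfl

instance sFinite_expMeasure (r : ℝ) : SFinite (expMeasure r) := by
  rw [expMeasure_eq_withDensity]
  infer_instance

lemma measurable_exponentialPDF (r : ℝ) : Measurable (exponentialPDF r) :=
  (measurable_exponentialPDFReal r).ennreal_ofReal

lemma expMeasure_Ioi {r v : ℝ} (hr : 0 < r) (hv : 0 ≤ v) :
    expMeasure r (Ioi v) = ENNReal.ofReal (exp (-(r * v))) := by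
  have := isProbabilityMeasure_expMeasure hr
  have hcdf : 0 ≤ 1 - exp (-(r * v)) := one_sub_exp_neg_nonneg (by positivity)
  rw [← compl_Iic, prob_compl_eq_one_sub measurableSet_Iic, expMeasure_eq_withDensity,
    withDensity_apply _ measurableSet_Iic, lintegral_exponentialPDF_eq_antiDeriv hr, if_pos hv,
    ← ENNReal.ofReal_one, ← ENNReal.ofReal_sub _ hcdf, sub_sub_cancel]

lemma expMeasure_Ioc {r a b : ℝ} (hr : 0 < r) (ha : 0 ≤ a) (hab : a ≤ b) :
    expMeasure r (Ioc a b) = ENNReal.ofReal (exp (-(r * a)) - exp (-(r * b))) := by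
  have := isProbabilityMeasure_expMeasure hr
  rw [← Ioi_sdiff_Ioi, measure_sdiff (Ioi_subset_Ioi hab) measurableSet_Ioi.nullMeasurableSet
    (measure_ne_top _ _), expMeasure_Ioi hr ha, expMeasure_Ioi hr (ha.trans hab),
    ← ENNReal.ofReal_sub _ (exp_nonneg _)]

lemma exponentialPDF_mul_exp {a b : ℝ} (ha : 0 < a) (hb : 0 ≤ b) (t : ℝ) :
    exponentialPDF a t * ENNReal.ofReal (exp (-(b * t))) =
      ENNReal.ofReal (a / (a + b)) * exponentialPDF (a + b) t := by
  rcases lt_or_ge t 0 with ht | ht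
  · simp [exponentialPDF_of_neg ht]
  · rw [exponentialPDF_of_nonneg ht, exponentialPDF_of_nonneg ht,
      ← ENNReal.ofReal_mul (by positivity), ← ENNReal.ofReal_mul (by positivity),
      show -((a + b) * t) = -(a * t) + -(b * t) by ring, exp_add]
    congr 1
    field_simp

lemma setLIntegral_Ioi_exp_expMeasure {a b v : ℝ} (ha : 0 < a) (hb : 0 ≤ b) (hv : 0 ≤ v) :
    ∫⁻ t in Ioi v, ENNReal.ofReal (exp (-(b * t))) ∂expMeasure a =
      ENNReal.ofReal (a / (a + b) * exp (-((a + b) * v))) := by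
  rw [expMeasure_eq_withDensity, setLIntegral_withDensity_eq_setLIntegral_mul _
    (measurable_exponentialPDF a) (by fun_prop) measurableSet_Ioi]
  simp only [Pi.mul_apply, exponentialPDF_mul_exp ha hb]
  rw [lintegral_const_mul _ (measurable_exponentialPDF _), ← withDensity_apply _ measurableSet_Ioi,
    ← expMeasure_eq_withDensity, expMeasure_Ioi (by positivity) hv,
    ← ENNReal.ofReal_mul (by positivity)]

lemma measurableSet_lt_le_add_lt_min (c v : ℝ) :
    MeasurableSet {p : ℝ × ℝ | (p.1 < p.2 ∧ p.2 ≤ p.1 + c) ∧ v < min p.1 p.2} :=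
  ((measurableSet_lt measurable_fst measurable_snd).inter
    (measurableSet_le measurable_snd (measurable_fst.add_const _))).inter
    (measurableSet_lt measurable_const (measurable_fst.min measurable_snd))

lemma prod_expMeasure_lt_le_add_lt_min {a b c v : ℝ} (ha : 0 < a) (hb : 0 < b) (hc : 0 ≤ c)
    (hv : 0 ≤ v) :
    (expMeasure a).prod (expMeasure b)
        {p : ℝ × ℝ | (p.1 < p.2 ∧ p.2 ≤ p.1 + c) ∧ v < min p.1 p.2} =
      ENNReal.ofReal (a / (a + b) * (exp (-((a + b) * v)) * (1 - exp (-(b * c))))) := by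
  have hslice : ∀ t, expMeasure b
      (Prod.mk t ⁻¹' {p : ℝ × ℝ | (p.1 < p.2 ∧ p.2 ≤ p.1 + c) ∧ v < min p.1 p.2}) =
      (Ioi v).indicator (fun t ↦ expMeasure b (Ioc t (t + c))) t := by
    intro t
    by_cases hvt : v < t
    · rw [indicator_of_mem (mem_Ioi.2 hvt)]
      congr 1
      ext u
      simp only [mem_preimage, mem_ofPred_eq, mem_Ioc, lt_min_iff, and_iff_left_iff_imp]
      exact fun htu ↦ ⟨hvt, hvt.trans htu.1⟩
    · rw [indicator_of_notMem (notMem_Ioi.2 (not_lt.1 hvt))]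
      convert measure_empty (μ := expMeasure b)
      ext u
      simp only [mem_preimage, mem_ofPred_eq, mem_empty_iff_false, iff_false, lt_min_iff]
      exact fun h ↦ hvt h.2.1
  have hIoc : ∀ t ∈ Ioi v, expMeasure b (Ioc t (t + c)) =
      ENNReal.ofReal (1 - exp (-(b * c))) * ENNReal.ofReal (exp (-(b * t))) := by
    intro t ht
    rw [expMeasure_Ioc hb (hv.trans (le_of_lt ht)) (le_add_of_nonneg_right hc),
      ← ENNReal.ofReal_mul' (exp_nonneg _)]
    congr 1
    rw [show -(b * (t + c)) = -(b * t) + -(b * c) by ring, exp_add]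
    ring
  have hcdf : 0 ≤ 1 - exp (-(b * c)) := one_sub_exp_neg_nonneg (by positivity)
  rw [Measure.prod_apply (measurableSet_lt_le_add_lt_min c v), lintegral_congr hslice, lintegral_indicator measurableSet_Ioi,
    setLIntegral_congr_fun measurableSet_Ioi hIoc, lintegral_const_mul _ (by fun_prop),
    setLIntegral_Ioi_exp_expMeasure ha hb.le hv, ← ENNReal.ofReal_mul hcdf]
  congr 1
  ring

end ProbabilityTheory

/-- `n = 2` restart step: on the merger-by-time-`s` event, the clock
`ξ1 ⊓ ξ2` of the merged block is `Exp (x1 + x2)`-distributed and independent of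
the merger event:
`P(merger ∩ {ξ1 ⊓ ξ2 > v}) = exp (-(x1+x2) v) * (1 - exp (-x1 x2 s))`. -/
theorem stmt11 {Ω : Type*} [MeasurableSpace Ω] (P : Measure Ω) [IsProbabilityMeasure P]
    (x1 x2 : ℝ) (h1 : 0 < x1) (h2 : 0 < x2)
    (ξ1 ξ2 : Ω → ℝ) (hm1 : Measurable ξ1) (hm2 : Measurable ξ2)
    (hl1 : Measure.map ξ1 P = expMeasure x1) (hl2 : Measure.map ξ2 P = expMeasure x2)
    (hindep : IndepFun ξ1 ξ2 P) (s : ℝ) (hs : 0 < s) :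
    ∀ v : ℝ, 0 ≤ v →
      P ({ω | (ξ1 ω < ξ2 ω ∧ ξ2 ω ≤ ξ1 ω + s * x1) ∨
              (ξ2 ω < ξ1 ω ∧ ξ1 ω ≤ ξ2 ω + s * x2)} ∩
          {ω | v < min (ξ1 ω) (ξ2 ω)}) =
        ENNReal.ofReal (Real.exp (-((x1 + x2) * v)) * (1 - Real.exp (-(x1 * x2 * s)))) := by
  intro v hv
  set E : ℝ → Set (ℝ × ℝ) := fun c ↦ {p | (p.1 < p.2 ∧ p.2 ≤ p.1 + c) ∧ v < min p.1 p.2}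
  have hE : ∀ c, MeasurableSet (E c) := fun c ↦ measurableSet_lt_le_add_lt_min c v
  have hE' : MeasurableSet (Prod.swap ⁻¹' E (s * x2)) := measurable_swap (hE _)
  have hlaw : P.map (fun ω ↦ (ξ1 ω, ξ2 ω)) = (expMeasure x1).prod (expMeasure x2) := by
    rw [← hl1, ← hl2]
    exact (indepFun_iff_map_prod_eq_prod_map_map hm1.aemeasurable hm2.aemeasurable).1 hindep
  have hevent : {ω | (ξ1 ω < ξ2 ω ∧ ξ2 ω ≤ ξ1 ω + s * x1) ∨
        (ξ2 ω < ξ1 ω ∧ ξ1 ω ≤ ξ2 ω + s * x2)} ∩ {ω | v < min (ξ1 ω) (ξ2 ω)} =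
      (fun ω ↦ (ξ1 ω, ξ2 ω)) ⁻¹' (E (s * x1) ∪ Prod.swap ⁻¹' E (s * x2)) := by
    ext ω
    simp only [E, mem_inter_iff, mem_ofPred_eq, mem_preimage, mem_union, Prod.fst_swap,
      Prod.snd_swap, min_comm (ξ2 ω)]
    tauto
  have hdisj : Disjoint (E (s * x1)) (Prod.swap ⁻¹' E (s * x2)) :=
    disjoint_left.2 fun _ h h' ↦ h.1.1.not_gt h'.1.1
  have hK := mul_nonneg (exp_nonneg (-((x1 + x2) * v)))
    (one_sub_exp_neg_nonneg (x := x1 * x2 * s) (by positivity))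
  rw [hevent, ← Measure.map_apply (hm1.prodMk hm2) ((hE _).union hE'), hlaw,
    measure_union hdisj hE',
    Measure.measurePreserving_swap.measure_preimage (hE _).nullMeasurableSet,
    prod_expMeasure_lt_le_add_lt_min h1 h2 (by positivity) hv,
    prod_expMeasure_lt_le_add_lt_min h2 h1 (by positivity) hv,
    show x2 * (s * x1) = x1 * x2 * s by ring, show x1 * (s * x2) = x1 * x2 * s by ring,
    add_comm x2 x1]
  rw [← ENNReal.ofReal_add (mul_nonneg (by positivity) hK) (mul_nonneg (by positivity) hK),
    ← add_mul, ← add_div, div_self (by positivity), one_mul]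
end

section
/- For x ∈ l² nonincreasing and m ∈ ℕ, let f_m(x) = (x1,…,xm,0,0,…). Then d(x, f_m(x))² = ∑_{i>m} xi², and for any x, y ∈ l² and any bijection b : ℕ → ℕ, d(ord(x), ord(y))² ≤ ∑_i (x_i - y_{b(i)})², where ord denotes decreasing rearrangement and d is the l² distance. -/
/-!
Expanding the squares, both sides of the inequality are `‖x‖² + ‖y‖² - 2 ⟪·, ·⟫`, so it reduces to
`∑ x i * y (b i) ≤ ∑ ord x i * ord y i`. A finite partial sum of the left side is a matched sum
of the similarly ordered sequences `ord x`, `ord y`; extending the matching to a permutation with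
finite support, the finite rearrangement inequality bounds it by the right side.
-/

open Finset Function

theorem Equiv.Perm.exists_eqOn_of_injOn {α : Type*} [DecidableEq α] {s t : Finset α}
    {f : α → α} (hst : s ⊆ t) (hf : Set.MapsTo f s t) (hinj : Set.InjOn f s) :
    ∃ σ : Equiv.Perm α, (∀ i ∈ s, σ i = f i) ∧ {x | σ x ≠ x} ⊆ t := by
  have hmaps : Set.MapsTo (fun i : t => f i) {i | (i : α) ∈ s} t := fun i hi => hf hi
  have hinj' : Set.InjOn (fun i : t => f i) {i | (i : α) ∈ s} :=
    fun i hi j hj h => Subtype.ext (hinj hi hj h)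
  obtain ⟨g, hg⟩ := hmaps.exists_equiv_extend_of_card_eq (Fintype.card_coe t) hinj'
  refine ⟨Equiv.Perm.ofSubtype g, fun i hi => ?_, fun x hx => ?_⟩
  · rw [Equiv.Perm.ofSubtype_apply_of_mem g (hst hi)]
    exact hg ⟨i, hst hi⟩ hi
  · by_contra hxt
    exact hx (Equiv.Perm.ofSubtype_apply_of_not_mem g hxt)

variable {ι : Type*}

section Rearrangement

variable [LinearOrder ι] {a c : ι → ℝ}

theorem Antitone.sum_mul_comp_le_tsum_mul (ha : Antitone a) (hc : Antitone c)
    (ha0 : 0 ≤ a) (hc0 : 0 ≤ c) (hac : Summable fun i => a i * c i) {f : ι → ι}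
    (hf : Injective f) (s : Finset ι) :
    ∑ i ∈ s, a i * c (f i) ≤ ∑' i, a i * c i := by
  classical
  obtain ⟨σ, hσf, hσt⟩ := Equiv.Perm.exists_eqOn_of_injOn (t := s ∪ s.image f)
    subset_union_left (fun i hi => mem_union_right _ (mem_image_of_mem f hi)) hf.injOn
  have hnonneg : ∀ i j, 0 ≤ a i * c j := fun i j => mul_nonneg (ha0 i) (hc0 j)
  calc ∑ i ∈ s, a i * c (f i) = ∑ i ∈ s, a i * c (σ i) :=
        sum_congr rfl fun i hi => by rw [hσf i hi]
    _ ≤ ∑ i ∈ s ∪ s.image f, a i * c (σ i) :=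
        sum_le_sum_of_subset_of_nonneg subset_union_left fun i _ _ => hnonneg _ _
    _ ≤ ∑ i ∈ s ∪ s.image f, a i * c i :=
        ((ha.monovary hc).monovaryOn _).sum_mul_comp_perm_le_sum_mul hσt
    _ ≤ ∑' i, a i * c i := hac.sum_le_tsum _ fun i _ => hnonneg _ _

theorem Antitone.tsum_mul_comp_le_tsum_mul (ha : Antitone a) (hc : Antitone c)
    (ha0 : 0 ≤ a) (hc0 : 0 ≤ c) (hac : Summable fun i => a i * c i) {f : ι → ι}
    (hf : Injective f) :
    ∑' i, a i * c (f i) ≤ ∑' i, a i * c i :=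
  tsum_le_of_sum_le' (tsum_nonneg fun i => mul_nonneg (ha0 i) (hc0 i))
    (ha.sum_mul_comp_le_tsum_mul hc ha0 hc0 hac hf)

end Rearrangement

theorem summable_mul_of_summable_sq {u v : ι → ℝ} (hu : Summable fun i => u i ^ 2)
    (hv : Summable fun i => v i ^ 2) : Summable fun i => u i * v i :=
  Summable.of_norm_bounded ((hu.add hv).div_const 2) fun i => by
    rw [Real.norm_eq_abs, abs_mul, le_div_iff₀ two_pos, ← sq_abs (u i), ← sq_abs (v i)]
    nlinarith [two_mul_le_add_sq |u i| |v i|]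

theorem tsum_sub_sq {u v : ι → ℝ} (hu : Summable fun i => u i ^ 2)
    (hv : Summable fun i => v i ^ 2) :
    ∑' i, (u i - v i) ^ 2 = ∑' i, u i ^ 2 + ∑' i, v i ^ 2 - 2 * ∑' i, u i * v i := by
  rw [← hu.tsum_add hv, ← tsum_mul_left,
    ← (hu.add hv).tsum_sub ((summable_mul_of_summable_sq hu hv).mul_left 2)]
  exact tsum_congr fun i => by ring

/-- Truncation distance and the rearrangement inequality in `l²`:
`d(x, f_m x)² = ∑_{i ≥ m} x i ²`, and for decreasing rearrangements
(`ord x = x ∘ ex`, `ord y = y ∘ ey` with `ex, ey` bijections and the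
compositions antitone), `d(ord x, ord y)² ≤ ∑ (x i - y (b i))²` for any
bijection `b`. -/
theorem stmt13 :
    (∀ (x : ℕ → ℝ) (m : ℕ), (∀ i, 0 ≤ x i) → Summable (fun i => x i ^ 2) →
      (∑' i, (x i - if i < m then x i else 0) ^ 2) =
        ∑' i, if m ≤ i then x i ^ 2 else 0) ∧
    (∀ (x y : ℕ → ℝ) (ex ey : Equiv ℕ ℕ) (b : ℕ → ℕ), Function.Bijective b →
      (∀ i, 0 ≤ x i) → (∀ i, 0 ≤ y i) →
      Summable (fun i => x i ^ 2) → Summable (fun i => y i ^ 2) →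
      Antitone (fun i => x (ex i)) → Antitone (fun i => y (ey i)) →
      (∑' i, (x (ex i) - y (ey i)) ^ 2) ≤ ∑' i, (x i - y (b i)) ^ 2) := by
  refine ⟨fun x m _ _ => tsum_congr fun i => ?_, ?_⟩
  · by_cases h : i < m <;> simp [h]
  intro x y ex ey b hb hx0 hy0 hx2 hy2 hax hay
  have hxex2 : Summable fun i => x (ex i) ^ 2 := ex.summable_iff.2 hx2
  have hyey2 : Summable fun i => y (ey i) ^ 2 := ey.summable_iff.2 hy2
  have hyb2 : Summable fun i => y (b i) ^ 2 := (Equiv.ofBijective b hb).summable_iff.2 hy2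
  have hyb : ∑' i, y (b i) ^ 2 = ∑' i, y i ^ 2 :=
    (Equiv.ofBijective b hb).tsum_eq fun i => y i ^ 2
  have hmatch : ∑' i, x i * y (b i) ≤ ∑' i, x (ex i) * y (ey i) :=
    calc ∑' i, x i * y (b i) = ∑' i, x (ex i) * y (ey (ey.symm (b (ex i)))) := by
          simp only [Equiv.apply_symm_apply]
          exact (ex.tsum_eq fun i => x i * y (b i)).symm
      _ ≤ ∑' i, x (ex i) * y (ey i) :=
          hax.tsum_mul_comp_le_tsum_mul hay (fun i => hx0 _) (fun i => hy0 _)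
            (summable_mul_of_summable_sq hxex2 hyey2)
            (ey.symm.injective.comp (hb.injective.comp ex.injective))
  rw [tsum_sub_sq hxex2 hyey2, tsum_sub_sq hx2 hyb2, ex.tsum_eq fun i => x i ^ 2,
    ey.tsum_eq fun i => y i ^ 2, hyb]
  linarith
end

section
/- Let x1,…,xn > 0 with n ≥ 2 and let ξ1,…,ξn be independent exponentials with rates xi. Almost surely, all the pairwise intersection times s_{k,j} of the half-lines L'_k(s) = ξ_{(k)} - (∑_{m<k} x_{πm})·s, 1 ≤ j < k ≤ n, are distinct and strictly positive. -/
/-!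
Positivity is immediate: on the event where `prm` sorts the `ξ i`, the numerator of each
intersection time is positive, and the partial sums of the positive rates are strictly
increasing. For distinctness, two intersection times coincide exactly when a nontrivial
linear relation `∑ i, c i * ξ i = 0` holds, whose coefficients are built from the partial
sums. Such a relation has probability zero: isolating one variable with `c i₀ ≠ 0`, the rest
of the sum is independent of it, and the exponential law of `ξ i₀` has no atoms. Since `prm`
is random, one takes the union of these null events over all permutations.
-/

open MeasureTheory ProbabilityTheory Real Finset

/-- The intersection time of the half-lines `L'_k` and `L'_j` of Uribe's diagram,
where `L'_k (s) = ξ_{(k)} - (x_{π 1} + … + x_{π (k-1)}) * s`. -/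
noncomputable def interTime {n : ℕ} (x : Fin n → ℝ) (ξs : Fin n → ℝ)
    (prm : Equiv.Perm (Fin n)) (j k : Fin n) : ℝ :=
  (ξs (prm k) - ξs (prm j)) /
    ((∑ m ∈ Finset.univ.filter (fun m : Fin n => m < k), x (prm m)) -
      ∑ m ∈ Finset.univ.filter (fun m : Fin n => m < j), x (prm m))

open scoped Matrix

instance nullSingletonClass_expMeasure (r : ℝ) : NullSingletonClass (expMeasure r) := by
  unfold expMeasure gammaMeasure
  infer_instance

lemma MeasureTheory.Measure.nullSingletonClass_map_of_injective {α β : Type*}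
    [MeasurableSpace α] [MeasurableSpace β] [MeasurableSingletonClass β] {μ : Measure α}
    [NullSingletonClass μ] {f : α → β} (hf : Measurable f) (hinj : Function.Injective f) :
    NullSingletonClass (μ.map f) where
  measure_singleton y := by
    rw [Measure.map_apply hf (measurableSet_singleton y)]
    exact (Set.subsingleton_singleton.preimage hinj).measure_zero μ

lemma ProbabilityTheory.IndepFun.ae_add_ne_zero {Ω G : Type*} [MeasurableSpace Ω]
    {P : Measure Ω} [IsFiniteMeasure P] [AddGroup G] [MeasurableSpace G]
    [MeasurableSingletonClass G] [MeasurableAdd₂ G] {Z W : Ω → G} (hZ : Measurable Z)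
    (hW : Measurable W) (h : IndepFun Z W P) [NullSingletonClass (P.map W)] :
    ∀ᵐ ω ∂P, Z ω + W ω ≠ 0 := by
  have hS : MeasurableSet {p : G × G | p.1 + p.2 = 0} :=
    measurable_add (measurableSet_singleton 0)
  have hsection (z : G) : Prod.mk z ⁻¹' {p : G × G | p.1 + p.2 = 0} = {-z} := by
    ext w
    simp [add_eq_zero_iff_neg_eq, eq_comm]
  rw [ae_iff]
  simp only [ne_eq, not_not]
  calc P {ω | Z ω + W ω = 0}
      = P.map (fun ω => (Z ω, W ω)) {p : G × G | p.1 + p.2 = 0} :=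
        (Measure.map_apply (hZ.prodMk hW) hS).symm
    _ = ((P.map Z).prod (P.map W)) {p : G × G | p.1 + p.2 = 0} := by
        rw [(indepFun_iff_map_prod_eq_prod_map_map hZ.aemeasurable hW.aemeasurable).mp h]
    _ = 0 := Measure.measure_prod_null_of_ae_null hS <|
        Filter.Eventually.of_forall fun z => by simp [hsection]

lemma ProbabilityTheory.iIndepFun.ae_dotProduct_ne_zero {Ω ι : Type*} [MeasurableSpace Ω]
    {P : Measure Ω} [IsFiniteMeasure P] [Fintype ι] {ξ : ι → Ω → ℝ} (hm : ∀ i, Measurable (ξ i))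
    (hindep : iIndepFun ξ P) (hatom : ∀ i, NullSingletonClass (P.map (ξ i)))
    {c : ι → ℝ} (hc : c ≠ 0) :
    ∀ᵐ ω ∂P, c ⬝ᵥ (fun i => ξ i ω) ≠ 0 := by
  classical
  obtain ⟨i₀, hi₀⟩ := Function.ne_iff.mp hc
  set g : ι → Ω → ℝ := fun i ω => c i * ξ i ω
  have hgm (i : ι) : Measurable (g i) := (hm i).const_mul _
  have hindep_g : iIndepFun g P :=
    hindep.comp (fun i y => c i * y) fun i => measurable_const_mul _
  have : NullSingletonClass (P.map (g i₀)) := by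
    have hmap : P.map (g i₀) = (P.map (ξ i₀)).map (c i₀ * ·) :=
      (Measure.map_map (measurable_const_mul _) (hm i₀)).symm
    rw [hmap]
    exact Measure.nullSingletonClass_map_of_injective (measurable_const_mul _)
      (mul_right_injective₀ hi₀)
  have hsplit (ω : Ω) : c ⬝ᵥ (fun i => ξ i ω) = (∑ j ∈ univ.erase i₀, g j) ω + g i₀ ω := by
    rw [Finset.sum_apply, Finset.sum_erase_add _ _ (mem_univ i₀)]
    rfl
  simp only [hsplit]
  exact IndepFun.ae_add_ne_zero (by fun_prop) (hgm i₀)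
    (hindep_g.indepFun_finsetSum_of_notMem hgm (notMem_erase i₀ _))

section CrossCoeff

variable {ι : Type*} [DecidableEq ι]

/-- `crossCoeff D j k j' k' ⬝ᵥ v = 0` says that the chords of `v` against `D` over `[j, k]` and
`[j', k']` have the same slope. -/
noncomputable def crossCoeff (D : ι → ℝ) (j k j' k' : ι) : ι → ℝ :=
  (D k' - D j') • (Pi.single k 1 - Pi.single j 1) -
    (D k - D j) • (Pi.single k' 1 - Pi.single j' 1)

lemma crossCoeff_dotProduct [Fintype ι] (D v : ι → ℝ) (j k j' k' : ι) :
    crossCoeff D j k j' k' ⬝ᵥ v = (D k' - D j') * (v k - v j) - (D k - D j) * (v k' - v j') := by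
  simp only [crossCoeff, sub_dotProduct, smul_dotProduct, single_dotProduct, one_mul, smul_eq_mul]

lemma crossCoeff_ne_zero [LinearOrder ι] {D : ι → ℝ} (hD : StrictMono D) {j k j' k' : ι}
    (hjk : j < k) (hjk' : j' < k') (hne : (j, k) ≠ (j', k')) :
    crossCoeff D j k j' k' ≠ 0 := by
  intro h
  have hD₁ := sub_pos.2 (hD hjk)
  have hD₂ := sub_pos.2 (hD hjk')
  rcases lt_trichotomy k k' with hkk' | rfl | hk'k
  · have := congr_fun h k'
    simp [crossCoeff, hkk'.ne', (hjk.trans hkk').ne', hjk'.ne'] at this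
    linarith
  · have hjj' : j ≠ j' := fun e => hne (by rw [e])
    have := congr_fun h j
    simp [crossCoeff, hjk.ne, hjj'] at this
    linarith
  · have := congr_fun h k
    simp [crossCoeff, hk'k.ne', (hjk'.trans hk'k).ne', hjk.ne'] at this
    linarith

end CrossCoeff

section IntersectionTimes

variable {n : ℕ} {x : Fin n → ℝ}

/-- The absolute slope `x_{σ 0} + … + x_{σ (k-1)}` of the half-line `L'_k`. -/
noncomputable def partialRate (x : Fin n → ℝ) (σ : Equiv.Perm (Fin n)) (k : Fin n) : ℝ :=
  ∑ m ∈ univ.filter (· < k), x (σ m)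

lemma partialRate_strictMono (hx : ∀ i, 0 < x i) (σ : Equiv.Perm (Fin n)) :
    StrictMono (partialRate x σ) := fun j k hjk =>
  Finset.sum_lt_sum_of_subset (i := j)
    (fun m hm => by
      simp only [mem_filter, mem_univ, true_and] at hm ⊢
      exact hm.trans hjk)
    (by simp [hjk]) (by simp) (hx _) fun m _ _ => (hx _).le

lemma interTime_eq_div (x ξs : Fin n → ℝ) (σ : Equiv.Perm (Fin n)) (j k : Fin n) :
    interTime x ξs σ j k = (ξs (σ k) - ξs (σ j)) / (partialRate x σ k - partialRate x σ j) :=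
  rfl

lemma interTime_pos (hx : ∀ i, 0 < x i) {ξs : Fin n → ℝ} {σ : Equiv.Perm (Fin n)}
    (hξ : StrictMono fun i => ξs (σ i)) {j k : Fin n} (hjk : j < k) :
    0 < interTime x ξs σ j k := by
  rw [interTime_eq_div]
  exact div_pos (sub_pos.2 (hξ hjk)) (sub_pos.2 (partialRate_strictMono hx σ hjk))

lemma interTime_eq_interTime_iff (hx : ∀ i, 0 < x i) (ξs : Fin n → ℝ) (σ : Equiv.Perm (Fin n))
    {j k j' k' : Fin n} (hjk : j < k) (hjk' : j' < k') :
    interTime x ξs σ j k = interTime x ξs σ j' k' ↔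
      crossCoeff (partialRate x σ) j k j' k' ⬝ᵥ (fun i => ξs (σ i)) = 0 := by
  have hD := partialRate_strictMono hx σ
  rw [interTime_eq_div, interTime_eq_div, crossCoeff_dotProduct,
    div_eq_div_iff (sub_pos.2 (hD hjk)).ne' (sub_pos.2 (hD hjk')).ne']
  constructor <;> intro h <;> linear_combination h

end IntersectionTimes

theorem stmt14_general {Ω : Type*} [MeasurableSpace Ω] (P : Measure Ω) [IsProbabilityMeasure P]
    (n : ℕ) (x : Fin n → ℝ) (hx : ∀ i, 0 < x i)
    (ξ : Fin n → Ω → ℝ) (hm : ∀ i, Measurable (ξ i))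
    (hl : ∀ i, Measure.map (ξ i) P = expMeasure (x i))
    (hindep : iIndepFun ξ P)
    (prm : Ω → Equiv.Perm (Fin n))
    (hprm : ∀ᵐ ω ∂P, StrictMono (fun i => ξ (prm ω i) ω)) :
    ∀ᵐ ω ∂P,
      (∀ j k : Fin n, j < k → 0 < interTime x (fun i => ξ i ω) (prm ω) j k) ∧
      (∀ j k j' k' : Fin n, j < k → j' < k' → (j, k) ≠ (j', k') →
        interTime x (fun i => ξ i ω) (prm ω) j k ≠
          interTime x (fun i => ξ i ω) (prm ω) j' k') := by
  have hatom (i : Fin n) : NullSingletonClass (P.map (ξ i)) := hl i ▸ inferInstance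
  have hnull : ∀ᵐ ω ∂P, ∀ σ : Equiv.Perm (Fin n), ∀ j k j' k' : Fin n,
      j < k → j' < k' → (j, k) ≠ (j', k') →
        crossCoeff (partialRate x σ) j k j' k' ⬝ᵥ ((fun i => ξ i ω) ∘ σ) ≠ 0 := by
    simp only [ae_all_iff, Filter.eventually_imp_distrib_left]
    intro σ j k j' k' hjk hjk' hne
    have hc := crossCoeff_ne_zero (partialRate_strictMono hx σ) hjk hjk' hne
    simp only [← comp_equiv_symm_dotProduct]
    refine hindep.ae_dotProduct_ne_zero hm hatom fun h => hc (funext fun i => ?_)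
    simpa using congr_fun h (σ i)
  filter_upwards [hprm, hnull] with ω hmono hω
  refine ⟨fun j k hjk => interTime_pos hx hmono hjk, fun j k j' k' hjk hjk' hne => ?_⟩
  rw [ne_eq, interTime_eq_interTime_iff hx _ _ hjk hjk']
  exact hω (prm ω) j k j' k' hjk hjk' hne

/-- Almost surely, all pairwise intersection times of the half-lines of
Uribe's diagram are strictly positive and pairwise distinct. -/
theorem stmt14 {Ω : Type*} [MeasurableSpace Ω] (P : Measure Ω) [IsProbabilityMeasure P]
    (n : ℕ) (hn : 2 ≤ n) (x : Fin n → ℝ) (hx : ∀ i, 0 < x i)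
    (ξ : Fin n → Ω → ℝ) (hm : ∀ i, Measurable (ξ i))
    (hl : ∀ i, Measure.map (ξ i) P = expMeasure (x i))
    (hindep : iIndepFun ξ P)
    (prm : Ω → Equiv.Perm (Fin n))
    (hprm : ∀ᵐ ω ∂P, StrictMono (fun i => ξ (prm ω i) ω)) :
    ∀ᵐ ω ∂P,
      (∀ j k : Fin n, j < k → 0 < interTime x (fun i => ξ i ω) (prm ω) j k) ∧
      (∀ j k j' k' : Fin n, j < k → j' < k' → (j, k) ≠ (j', k') →
        interTime x (fun i => ξ i ω) (prm ω) j k ≠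
          interTime x (fun i => ξ i ω) (prm ω) j' k') :=
  stmt14_general P n x hx ξ hm hl hindep prm hprm
end

section
/- Let x^{(n)} be finite nonincreasing nonnegative vectors satisfying: σ3(x^{(n)})/σ2(x^{(n)})³ → κ + ∑_j cj³, x_j^{(n)}/σ2(x^{(n)}) → cj for each j, and σ2(x^{(n)}) → 0, where κ ≥ 0 and c ∈ l³. Then there exists an integer sequence m(n) → ∞ such that |∑_{i≤m(n)} (x_i^{(n)})²/σ2(x^{(n)})² - ∑_{i≤m(n)} ci²| → 0, |∑_{i≤m(n)} (x_i^{(n)}/σ2(x^{(n)}) - ci)³| → 0, and σ2(x^{(n)})·∑_{i≤m(n)} ci² → 0. -/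
open Filter

private lemma diag_extract {F : ℕ → ℕ → ℝ} (h0 : ∀ k n, 0 ≤ F k n)
    (h : ∀ k, Tendsto (fun n => F k n) atTop (nhds 0)) :
    ∃ m : ℕ → ℕ, Tendsto m atTop atTop ∧
      Tendsto (fun n => F (m n) n) atTop (nhds 0) := by
  have hN : ∀ k : ℕ, ∃ N : ℕ, ∀ n ≥ N, F k n ≤ 1 / ((k : ℝ) + 1) := by
    intro k
    have hpos : (0 : ℝ) < 1 / ((k : ℝ) + 1) := by positivity
    exact eventually_atTop.mp ((h k).eventually (eventually_le_nhds hpos))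
  choose N hNspec using hN
  set N' : ℕ → ℕ := fun k => ∑ j ∈ Finset.range (k + 1), N j with hN'def
  have hN'le : ∀ k, N k ≤ N' k := fun k =>
    Finset.single_le_sum (f := N) (fun j _ => Nat.zero_le _) (Finset.self_mem_range_succ k)
  set m : ℕ → ℕ := fun n => Nat.findGreatest (fun k => N' k ≤ n) n with hmdef
  have hm : Tendsto m atTop atTop := by
    rw [tendsto_atTop]
    intro K
    filter_upwards [eventually_ge_atTop (max (N' K) K)] with n hn
    exact Nat.le_findGreatest (le_trans (le_max_right _ _) hn)
      (le_trans (le_max_left _ _) hn)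
  refine ⟨m, hm, ?_⟩
  have hbound : ∀ᶠ n in atTop, F (m n) n ≤ 1 / ((m n : ℝ) + 1) := by
    filter_upwards [eventually_ge_atTop (N' 0)] with n hn
    have hspec : N' (m n) ≤ n :=
      Nat.findGreatest_spec (P := fun k => N' k ≤ n) (n := n) (m := 0) (Nat.zero_le n) hn
    exact hNspec (m n) n (le_trans (hN'le (m n)) hspec)
  refine squeeze_zero' (Eventually.of_forall fun n => h0 _ n) hbound ?_
  exact tendsto_one_div_add_atTop_nhds_zero_nat.comp hm

/-- Diagonal extraction of a slowly growing cutoff `m(n) → ∞` along which the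
truncated second- and third-moment sums converge as required for the scaling
limit of the simultaneous breadth-first walks. -/
theorem stmt15 (x : ℕ → ℕ → ℝ) (c : ℕ → ℝ) (κ : ℝ)
    (hxnn : ∀ n i, 0 ≤ x n i) (hxmono : ∀ n, Antitone (x n))
    (hxfin : ∀ n, (Function.support (x n)).Finite)
    (hcnn : ∀ j, 0 ≤ c j) (hcmono : Antitone c)
    (hc3 : Summable (fun j => c j ^ 3)) (hκ : 0 ≤ κ)
    (h1 : Tendsto (fun n => (∑' i, x n i ^ 3) / (∑' i, x n i ^ 2) ^ 3) atTop
      (nhds (κ + ∑' j, c j ^ 3)))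
    (h3 : ∀ j, Tendsto (fun n => x n j / ∑' i, x n i ^ 2) atTop (nhds (c j)))
    (h4 : Tendsto (fun n => ∑' i, x n i ^ 2) atTop (nhds 0)) :
    ∃ m : ℕ → ℕ, Tendsto m atTop atTop ∧
      Tendsto (fun n => |(∑ i ∈ Finset.range (m n), x n i ^ 2 / (∑' i, x n i ^ 2) ^ 2) -
        ∑ i ∈ Finset.range (m n), c i ^ 2|) atTop (nhds 0) ∧
      Tendsto (fun n => |∑ i ∈ Finset.range (m n),
        (x n i / (∑' i, x n i ^ 2) - c i) ^ 3|) atTop (nhds 0) ∧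
      Tendsto (fun n => (∑' i, x n i ^ 2) * ∑ i ∈ Finset.range (m n), c i ^ 2) atTop
        (nhds 0) := by
  set σ : ℕ → ℝ := fun n => ∑' i, x n i ^ 2 with hσ
  have hσnn : ∀ n, 0 ≤ σ n := fun n => tsum_nonneg fun i => sq_nonneg _
  set A : ℕ → ℕ → ℝ := fun k n =>
    |(∑ i ∈ Finset.range k, x n i ^ 2 / (σ n) ^ 2) - ∑ i ∈ Finset.range k, c i ^ 2| with hA
  set B : ℕ → ℕ → ℝ := fun k n =>
    |∑ i ∈ Finset.range k, (x n i / σ n - c i) ^ 3| with hB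
  set C : ℕ → ℕ → ℝ := fun k n => σ n * ∑ i ∈ Finset.range k, c i ^ 2 with hC
  have hCnn : ∀ k n, 0 ≤ C k n := fun k n =>
    mul_nonneg (hσnn n) (Finset.sum_nonneg fun i _ => sq_nonneg _)
  have hAten : ∀ k, Tendsto (fun n => A k n) atTop (nhds 0) := by
    intro k
    have hsum : Tendsto (fun n => ∑ i ∈ Finset.range k, x n i ^ 2 / (σ n) ^ 2) atTop
        (nhds (∑ i ∈ Finset.range k, c i ^ 2)) := by
      refine tendsto_finset_sum _ fun i _ => ?_
      simpa [div_pow] using (h3 i).pow 2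
    have := (hsum.sub (tendsto_const_nhds
      (x := ∑ i ∈ Finset.range k, c i ^ 2) (f := atTop))).abs
    simpa using this
  have hBten : ∀ k, Tendsto (fun n => B k n) atTop (nhds 0) := by
    intro k
    have hsum : Tendsto (fun n => ∑ i ∈ Finset.range k, (x n i / σ n - c i) ^ 3) atTop
        (nhds 0) := by
      have := tendsto_finset_sum (Finset.range k)
        (fun i (_ : i ∈ Finset.range k) =>
          (((h3 i).sub (tendsto_const_nhds (x := c i) (f := atTop))).pow 3))
      simpa using this
    simpa using hsum.abs
  have hCten : ∀ k, Tendsto (fun n => C k n) atTop (nhds 0) := by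
    intro k
    have := h4.mul_const (∑ i ∈ Finset.range k, c i ^ 2)
    simpa using this
  have hF : ∀ k, Tendsto (fun n => A k n + B k n + C k n) atTop (nhds 0) := by
    intro k
    have := ((hAten k).add (hBten k)).add (hCten k)
    simpa using this
  have hF0 : ∀ k n, 0 ≤ A k n + B k n + C k n := by
    intro k n
    have := abs_nonneg ((∑ i ∈ Finset.range k, x n i ^ 2 / (σ n) ^ 2) -
      ∑ i ∈ Finset.range k, c i ^ 2)
    have := abs_nonneg (∑ i ∈ Finset.range k, (x n i / σ n - c i) ^ 3)
    have := hCnn k n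
    simp only [hA, hB, hC]
    positivity
  obtain ⟨m, hm, hlim⟩ := diag_extract hF0 hF
  refine ⟨m, hm, ?_, ?_, ?_⟩
  · refine squeeze_zero (fun n => abs_nonneg _) (fun n => ?_) hlim
    have h1 := abs_nonneg (∑ i ∈ Finset.range (m n), (x n i / σ n - c i) ^ 3)
    have h2 := hCnn (m n) n
    simp only [hA, hB, hC] at *
    linarith
  · refine squeeze_zero (fun n => abs_nonneg _) (fun n => ?_) hlim
    have h1 := abs_nonneg ((∑ i ∈ Finset.range (m n), x n i ^ 2 / (σ n) ^ 2) -
      ∑ i ∈ Finset.range (m n), c i ^ 2)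
    have h2 := hCnn (m n) n
    simp only [hA, hB, hC] at *
    linarith
  · refine squeeze_zero (fun n => hCnn (m n) n) (fun n => ?_) hlim
    have h1 := abs_nonneg ((∑ i ∈ Finset.range (m n), x n i ^ 2 / (σ n) ^ 2) -
      ∑ i ∈ Finset.range (m n), c i ^ 2)
    have h2 := abs_nonneg (∑ i ∈ Finset.range (m n), (x n i / σ n - c i) ^ 3)
    simp only [hA, hB, hC] at *
    linarith
end

section
/- For any (κ, 0, c) with κ > 0 and c ∈ l³ nonincreasing nonnegative (or κ = 0 and c ∈ l³ \ l²), there exists a sequence of finite nonincreasing nonnegative vectors x^{(n)} such that σ3(x^{(n)})/σ2(x^{(n)})³ → κ + ∑_j cj³, x_j^{(n)}/σ2(x^{(n)}) → cj for every j, and σ2(x^{(n)}) → 0 as n → ∞. -/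
/-!
Take a small mass `θ = 1/(n+1)` and `m ≈ κ / θ³`, and let `y` be the first `n + m` terms of
`max(c, θ)`, a nonincreasing vector. Since `c³ ≤ max(c, θ)³ ≤ c³ + θ³`, its cube sum lies between
`∑_{j<n} c_j³ + m θ³` and `∑ c³ + (n + m) θ³`, and both bounds tend to `∑ c³ + κ` because
`n θ³ → 0`. Its square sum tends to infinity: it is at least `m θ² ≈ κ / θ`, and at least a partial
sum of the divergent `∑ c²` when `κ = 0`. Dividing `y` by `σ₂(y)` gives `σ₂(x) = σ₂(y)⁻¹ → 0`,
`x_j / σ₂(x) = y_j → c_j` and `σ₃(x) / σ₂(x)³ = σ₃(y)`.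
-/

open Filter Finset

theorem exists_approx_of_unnormalized {L : ℝ} {c : ℕ → ℝ} (y : ℕ → ℕ → ℝ)
    (hnn : ∀ n i, 0 ≤ y n i) (hanti : ∀ n, Antitone (y n))
    (hfin : ∀ n, (Function.support (y n)).Finite)
    (hsq : Tendsto (fun n => ∑' i, y n i ^ 2) atTop atTop)
    (hcube : Tendsto (fun n => ∑' i, y n i ^ 3) atTop (nhds L))
    (happly : ∀ j, Tendsto (fun n => y n j) atTop (nhds (c j))) :
    ∃ x : ℕ → ℕ → ℝ,
      (∀ n i, 0 ≤ x n i) ∧ (∀ n, Antitone (x n)) ∧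
      (∀ n, (Function.support (x n)).Finite) ∧
      Tendsto (fun n => (∑' i, x n i ^ 3) / (∑' i, x n i ^ 2) ^ 3) atTop (nhds L) ∧
      (∀ j, Tendsto (fun n => x n j / ∑' i, x n i ^ 2) atTop (nhds (c j))) ∧
      Tendsto (fun n => ∑' i, x n i ^ 2) atTop (nhds 0) := by
  set Q := fun n => ∑' i, y n i ^ 2
  have hQ_pos : ∀ᶠ n in atTop, 0 < Q n := hsq.eventually_gt_atTop 0
  have tsum_pow : ∀ n r, ∑' i, ((Q n)⁻¹ * y n i) ^ r = (Q n)⁻¹ ^ r * ∑' i, y n i ^ r :=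
    fun n r => by simp only [mul_pow, tsum_mul_left]
  have tsum_sq : ∀ᶠ n in atTop, ∑' i, ((Q n)⁻¹ * y n i) ^ 2 = (Q n)⁻¹ := by
    filter_upwards [hQ_pos] with n hn
    rw [tsum_pow, show ∑' i, y n i ^ 2 = Q n from rfl]
    field_simp
  refine ⟨fun n i => (Q n)⁻¹ * y n i, fun n i => ?_, fun n => ?_, fun n => ?_, ?_, fun j => ?_, ?_⟩
  · exact mul_nonneg (inv_nonneg.mpr (tsum_nonneg fun i => sq_nonneg _)) (hnn n i)
  · exact (hanti n).const_mul (inv_nonneg.mpr (tsum_nonneg fun i => sq_nonneg _))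
  · exact (hfin n).subset (Function.support_mul_subset_right _ _)
  · refine hcube.congr' ?_
    filter_upwards [hQ_pos, tsum_sq] with n hn hsq_n
    rw [hsq_n, tsum_pow]
    field_simp
  · refine (happly j).congr' ?_
    filter_upwards [hQ_pos, tsum_sq] with n hn hsq_n
    rw [hsq_n]
    field_simp
  · exact (tendsto_inv_atTop_zero.comp hsq).congr' (tsum_sq.mono fun n h => h.symm)

lemma max_pow_le_pow_add_pow {a b : ℝ} (ha : 0 ≤ a) (hb : 0 ≤ b) (r : ℕ) :
    max a b ^ r ≤ a ^ r + b ^ r := by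
  rcases max_cases a b with ⟨h, -⟩ | ⟨h, -⟩ <;> rw [h]
  · linarith [pow_nonneg hb r]
  · linarith [pow_nonneg ha r]

noncomputable def padMass (n : ℕ) : ℝ := 1 / ((n : ℝ) + 1)

lemma padMass_pos (n : ℕ) : 0 < padMass n := by
  unfold padMass
  positivity

lemma tendsto_padMass : Tendsto padMass atTop (nhds 0) :=
  tendsto_one_div_add_atTop_nhds_zero_nat

lemma natCast_mul_padMass_le_one (n : ℕ) : n * padMass n ≤ 1 := by
  unfold padMass
  rw [mul_one_div, div_le_one (by positivity)]
  linarith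

noncomputable def padCount (κ : ℝ) (n : ℕ) : ℕ := ⌈κ / padMass n ^ 3⌉₊

lemma le_padCount_mul (κ : ℝ) (n : ℕ) : κ ≤ padCount κ n * padMass n ^ 3 :=
  (div_le_iff₀ (pow_pos (padMass_pos n) 3)).mp (Nat.le_ceil _)

lemma padCount_mul_le {κ : ℝ} (hκ : 0 ≤ κ) (n : ℕ) :
    padCount κ n * padMass n ^ 3 ≤ κ + padMass n ^ 3 := by
  have hθ := pow_pos (padMass_pos n) 3
  have := Nat.ceil_lt_add_one (div_nonneg hκ hθ.le)
  calc (padCount κ n : ℝ) * padMass n ^ 3 ≤ (κ / padMass n ^ 3 + 1) * padMass n ^ 3 := by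
        unfold padCount
        gcongr
    _ = κ + padMass n ^ 3 := by rw [add_mul, div_mul_cancel₀ _ hθ.ne', one_mul]

noncomputable def paddedSeq (κ : ℝ) (c : ℕ → ℝ) (n j : ℕ) : ℝ :=
  if j < n + padCount κ n then max (c j) (padMass n) else 0

section paddedSeq

variable {κ : ℝ} {c : ℕ → ℝ}

lemma paddedSeq_nonneg (n j : ℕ) : 0 ≤ paddedSeq κ c n j := by
  unfold paddedSeq
  split_ifs
  · exact (padMass_pos n).le.trans (le_max_right _ _)
  · exact le_rfl

lemma paddedSeq_antitone (hc : Antitone c) (n : ℕ) : Antitone (paddedSeq κ c n) := by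
  intro i j hij
  unfold paddedSeq
  split_ifs with hj hi hi
  · exact max_le_max (hc hij) le_rfl
  · omega
  · exact (padMass_pos n).le.trans (le_max_right _ _)
  · exact le_rfl

lemma support_paddedSeq_finite (n : ℕ) : (Function.support (paddedSeq κ c n)).Finite := by
  refine (Set.finite_Iio (n + padCount κ n)).subset fun j hj => ?_
  by_contra hj'
  exact hj (if_neg hj')

lemma tendsto_paddedSeq_apply (hc0 : ∀ j, 0 ≤ c j) (j : ℕ) :
    Tendsto (fun n => paddedSeq κ c n j) atTop (nhds (c j)) := by
  have hmax : Tendsto (fun n => max (c j) (padMass n)) atTop (nhds (c j)) := by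
    simpa only [max_eq_left (hc0 j)] using (tendsto_const_nhds (x := c j)).max tendsto_padMass
  refine hmax.congr' ?_
  filter_upwards [eventually_gt_atTop j] with n hn
  exact (if_pos (by omega)).symm

lemma tsum_paddedSeq_pow (n : ℕ) {r : ℕ} (hr : r ≠ 0) :
    ∑' i, paddedSeq κ c n i ^ r = ∑ j ∈ range (n + padCount κ n), max (c j) (padMass n) ^ r := by
  rw [tsum_eq_sum (s := range (n + padCount κ n))]
  · refine sum_congr rfl fun j hj => ?_
    rw [paddedSeq, if_pos (mem_range.mp hj)]
  · intro j hj
    rw [paddedSeq, if_neg (by simpa using hj), zero_pow hr]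

lemma sum_range_pow_add_padCount_le (hc0 : ∀ j, 0 ≤ c j) (n : ℕ) {r : ℕ} (hr : r ≠ 0) :
    ∑ j ∈ range n, c j ^ r + padCount κ n * padMass n ^ r ≤ ∑' i, paddedSeq κ c n i ^ r := by
  rw [tsum_paddedSeq_pow n hr, sum_range_add]
  gcongr with j _ j _
  · exact hc0 j
  · exact le_max_left _ _
  · calc (padCount κ n : ℝ) * padMass n ^ r = ∑ _j ∈ range (padCount κ n), padMass n ^ r := by
          rw [sum_const, card_range, nsmul_eq_mul]
      _ ≤ _ := by
          gcongr
          · exact (padMass_pos n).le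
          · exact le_max_right _ _

lemma tsum_paddedSeq_pow_le (hc0 : ∀ j, 0 ≤ c j) (n : ℕ) {r : ℕ} (hr : r ≠ 0)
    (hsum : Summable fun j => c j ^ r) :
    ∑' i, paddedSeq κ c n i ^ r ≤ ∑' j, c j ^ r + (n + padCount κ n) * padMass n ^ r := by
  rw [tsum_paddedSeq_pow n hr]
  calc ∑ j ∈ range (n + padCount κ n), max (c j) (padMass n) ^ r
      ≤ ∑ j ∈ range (n + padCount κ n), (c j ^ r + padMass n ^ r) :=
        sum_le_sum fun j _ => max_pow_le_pow_add_pow (hc0 j) (padMass_pos n).le r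
    _ ≤ ∑' j, c j ^ r + (n + padCount κ n) * padMass n ^ r := by
        rw [sum_add_distrib, sum_const, card_range, nsmul_eq_mul]
        push_cast
        gcongr
        exact hsum.sum_le_tsum _ fun j _ => pow_nonneg (hc0 j) r

lemma tendsto_tsum_paddedSeq_cube (hκ : 0 ≤ κ) (hc0 : ∀ j, 0 ≤ c j)
    (hsum : Summable fun j => c j ^ 3) :
    Tendsto (fun n => ∑' i, paddedSeq κ c n i ^ 3) atTop (nhds (κ + ∑' j, c j ^ 3)) := by
  rw [add_comm κ]
  have hlower : Tendsto (fun n => ∑ j ∈ range n, c j ^ 3 + κ) atTop (nhds (∑' j, c j ^ 3 + κ)) :=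
    hsum.hasSum.tendsto_sum_nat.add_const κ
  have hupper : Tendsto (fun n => ∑' j, c j ^ 3 + κ + (padMass n ^ 2 + padMass n ^ 3)) atTop
      (nhds (∑' j, c j ^ 3 + κ)) := by
    simpa using tendsto_const_nhds.add
      ((tendsto_padMass.pow 2).add (tendsto_padMass.pow 3))
  refine tendsto_of_tendsto_of_tendsto_of_le_of_le hlower hupper (fun n => ?_) (fun n => ?_)
  · have := sum_range_pow_add_padCount_le (κ := κ) hc0 n three_ne_zero
    linarith [le_padCount_mul κ n]
  · have h_n : n * padMass n ^ 3 ≤ padMass n ^ 2 :=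
      calc n * padMass n ^ 3 = (n * padMass n) * padMass n ^ 2 := by ring
        _ ≤ padMass n ^ 2 := mul_le_of_le_one_left (sq_nonneg _) (natCast_mul_padMass_le_one n)
    have := tsum_paddedSeq_pow_le (κ := κ) hc0 n three_ne_zero hsum
    linarith [padCount_mul_le hκ n]

lemma tendsto_tsum_paddedSeq_sq_atTop (hc0 : ∀ j, 0 ≤ c j)
    (hlarge : 0 < κ ∨ ¬ Summable fun j => c j ^ 2) :
    Tendsto (fun n => ∑' i, paddedSeq κ c n i ^ 2) atTop atTop := by
  have hbound n := sum_range_pow_add_padCount_le (κ := κ) hc0 n two_ne_zero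
  rcases hlarge with hκ | hdiv
  · have hlin : Tendsto (fun n : ℕ => κ * ((n : ℝ) + 1)) atTop atTop :=
      (tendsto_atTop_add_const_right _ 1 tendsto_natCast_atTop_atTop).const_mul_atTop hκ
    refine tendsto_atTop_mono (fun n => ?_) hlin
    have hcount : κ * ((n : ℝ) + 1) ≤ padCount κ n * padMass n ^ 2 := by
      have hθ : κ * ((n : ℝ) + 1) = κ / padMass n := by
        unfold padMass
        field_simp
      rw [hθ, div_le_iff₀ (padMass_pos n), mul_assoc, ← pow_succ]
      exact le_padCount_mul κ n
    linarith [hbound n, sum_nonneg fun j (_ : j ∈ range n) => sq_nonneg (c j)]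
  · refine tendsto_atTop_mono (fun n => ?_)
      ((not_summable_iff_tendsto_nat_atTop_of_nonneg fun j => sq_nonneg (c j)).mp hdiv)
    linarith [hbound n, mul_nonneg (Nat.cast_nonneg (padCount κ n)) (sq_nonneg (padMass n))]

end paddedSeq

/-- Existence of approximating finite configurations for every point
`(κ, 0, c)` of the entrance-boundary parameter space: either `κ > 0` and
`c ∈ l³`, or `κ = 0` and `c ∈ l³ \ l²`. -/
theorem stmt16 (κ : ℝ) (c : ℕ → ℝ) (hcnn : ∀ j, 0 ≤ c j) (hcmono : Antitone c)
    (hcase : (0 < κ ∧ Summable (fun j => c j ^ 3)) ∨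
      (κ = 0 ∧ Summable (fun j => c j ^ 3) ∧ ¬ Summable (fun j => c j ^ 2))) :
    ∃ x : ℕ → ℕ → ℝ,
      (∀ n i, 0 ≤ x n i) ∧ (∀ n, Antitone (x n)) ∧
      (∀ n, (Function.support (x n)).Finite) ∧
      Tendsto (fun n => (∑' i, x n i ^ 3) / (∑' i, x n i ^ 2) ^ 3) atTop
        (nhds (κ + ∑' j, c j ^ 3)) ∧
      (∀ j, Tendsto (fun n => x n j / ∑' i, x n i ^ 2) atTop (nhds (c j))) ∧
      Tendsto (fun n => ∑' i, x n i ^ 2) atTop (nhds 0) := by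
  have hκ : 0 ≤ κ := hcase.elim (fun h => h.1.le) (fun h => h.1.ge)
  have hsum3 : Summable fun j => c j ^ 3 := hcase.elim And.right (fun h => h.2.1)
  have hlarge : 0 < κ ∨ ¬ Summable fun j => c j ^ 2 := hcase.imp And.left (fun h => h.2.2)
  exact exists_approx_of_unnormalized (paddedSeq κ c) paddedSeq_nonneg (paddedSeq_antitone hcmono)
    (fun _ => support_paddedSeq_finite _) (tendsto_tsum_paddedSeq_sq_atTop hcnn hlarge)
    (tendsto_tsum_paddedSeq_cube hκ hcnn hsum3) (tendsto_paddedSeq_apply hcnn)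
end

section
/- Let x1,…,xn > 0, q > 0, ξi independent Exp(xi), ξi^q = ξi/q, and let Z^{x,q}(s) = ∑_i xi·1{ξi^q ≤ s} - s. Let ξ^q_{(1)} < … < ξ^q_{(n)} be the order statistics and π the ordering permutation. If the exploration intervals I_l := (ξ^q_{(1)}, ξ^q_{(1)} + x_{π1} + … + x_{πl}] are such that ξ^q_{(l)} ∈ I_{l-1} for all l = 2,…,l₁-1 and ξ^q_{(l₁)} ∉ I_{l₁-1}, then with a₁ = ξ^q_{(1)} and b₁ = ξ^q_{(1)} + x_{π1} + … + x_{π(l₁-1)}, one has Z^{x,q}(s) > Z^{x,q}(a₁) = Z^{x,q}(b₁) for all s ∈ (a₁, b₁). -/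
open Finset

/-- Pathwise excursion property of the simultaneous breadth-first walk: if the
jump times `e 1, …, e (L-1)` all arrive during the exploration intervals and
`e L` arrives after, then on `(a, b)` with `a = e 0` and
`b = e 0 + y 0 + … + y (L-1)` the walk stays strictly above its past minimum
`-a = Z b`, i.e. `[a, b]` is an excursion above past minima of length
`y 0 + … + y (L-1)`. -/
theorem stmt17 (n : ℕ) (hn : 0 < n) (y e : Fin n → ℝ)
    (hy : ∀ i, 0 < y i) (he : StrictMono e) (hepos : ∀ i, 0 < e i)
    (Z : ℝ → ℝ)
    (hZ : ∀ s, Z s = (∑ i : Fin n, y i * (if e i ≤ s then (1 : ℝ) else 0)) - s)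
    (L : ℕ) (hL1 : 1 ≤ L) (hLn : L ≤ n)
    (hin : ∀ l : Fin n, (l : ℕ) < L →
      e l ≤ e ⟨0, hn⟩ + ∑ m ∈ Finset.univ.filter (fun m : Fin n => m < l), y m)
    (hout : ∀ hL : L < n,
      e ⟨0, hn⟩ + (∑ m ∈ Finset.univ.filter (fun m : Fin n => (m : ℕ) < L), y m) <
        e ⟨L, hL⟩) :
    Z (e ⟨0, hn⟩ + ∑ m ∈ Finset.univ.filter (fun m : Fin n => (m : ℕ) < L), y m) =
        -(e ⟨0, hn⟩) ∧
    ∀ s : ℝ, e ⟨0, hn⟩ < s →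
      s < e ⟨0, hn⟩ + (∑ m ∈ Finset.univ.filter (fun m : Fin n => (m : ℕ) < L), y m) →
      -(e ⟨0, hn⟩) < Z s := by
  classical
  set a := e ⟨0, hn⟩ with ha
  set S := ∑ m ∈ Finset.univ.filter (fun m : Fin n => (m : ℕ) < L), y m with hS
  have hZs : ∀ s, Z s =
      (∑ i ∈ Finset.univ.filter (fun i : Fin n => e i ≤ s), y i) - s := by
    intro s
    rw [hZ, Finset.sum_filter]
    congr 1
    exact Finset.sum_congr rfl fun i _ => by by_cases h : e i ≤ s <;> simp [h]
  have hin' : ∀ l : Fin n, (l : ℕ) < L →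
      e l ≤ a + ∑ m ∈ Finset.univ.filter (fun m : Fin n => (m : ℕ) < (l : ℕ)), y m := by
    intro l hl
    have hfeq : Finset.univ.filter (fun m : Fin n => m < l) =
        Finset.univ.filter (fun m : Fin n => (m : ℕ) < (l : ℕ)) := by
      ext m
      simp only [Finset.mem_filter, Finset.mem_univ, true_and, Fin.lt_def]
    have := hin l hl
    rwa [hfeq] at this
  have key1 : ∀ i : Fin n, (i : ℕ) < L → e i ≤ a + S := by
    intro i hi
    refine (hin' i hi).trans ?_
    gcongr
    refine Finset.sum_le_sum_of_subset_of_nonneg ?_ (fun m _ _ => (hy m).le)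
    intro m hm
    simp only [Finset.mem_filter, Finset.mem_univ, true_and] at hm ⊢
    omega
  have key2 : ∀ i : Fin n, L ≤ (i : ℕ) → a + S < e i := by
    intro i hi
    have hLn' : L < n := lt_of_le_of_lt hi i.isLt
    refine lt_of_lt_of_le (hout hLn') ?_
    rcases eq_or_lt_of_le hi with h | h
    · exact le_of_eq (congrArg e (Fin.ext h))
    · exact (he (show (⟨L, hLn'⟩ : Fin n) < i from h)).le
  constructor
  · rw [hZs]
    have hfe : Finset.univ.filter (fun i : Fin n => e i ≤ a + S) =
        Finset.univ.filter (fun m : Fin n => (m : ℕ) < L) := by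
      ext i
      simp only [Finset.mem_filter, Finset.mem_univ, true_and]
      constructor
      · intro h
        by_contra hc
        exact absurd h (not_le.2 (key2 i (le_of_not_gt hc)))
      · exact key1 i
    rw [hfe, ← hS]; ring
  · intro s has hsb
    rw [hZs]
    have hmain : s - a < ∑ i ∈ Finset.univ.filter (fun i : Fin n => e i ≤ s), y i := by
      by_cases hall : ∀ i : Fin n, (i : ℕ) < L → e i ≤ s
      · have hsub : Finset.univ.filter (fun m : Fin n => (m : ℕ) < L) ⊆
            Finset.univ.filter (fun i : Fin n => e i ≤ s) := by
          intro m hm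
          simp only [Finset.mem_filter, Finset.mem_univ, true_and] at hm ⊢
          exact hall m hm
        have := Finset.sum_le_sum_of_subset_of_nonneg hsub (fun m _ _ => (hy m).le)
        rw [← hS] at this
        linarith
      · push_neg at hall
        obtain ⟨j0, hj0L, hj0s⟩ := hall
        have hP : ∃ k : ℕ, ∃ hk : k < n, k < L ∧ s < e ⟨k, hk⟩ :=
          ⟨j0, j0.isLt, hj0L, by simpa using hj0s⟩
        obtain ⟨hjn, hjL, hjs⟩ := Nat.find_spec hP
        set j := Nat.find hP with hj
        have hmin : ∀ i : Fin n, (i : ℕ) < j → e i ≤ s := by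
          intro i hi
          by_contra hc
          exact Nat.find_min hP hi ⟨i.isLt, hi.trans hjL, by simpa using lt_of_not_ge hc⟩
        have hsub : Finset.univ.filter (fun m : Fin n => (m : ℕ) < j) ⊆
            Finset.univ.filter (fun i : Fin n => e i ≤ s) := by
          intro m hm
          simp only [Finset.mem_filter, Finset.mem_univ, true_and] at hm ⊢
          exact hmin m hm
        have hle := Finset.sum_le_sum_of_subset_of_nonneg hsub (fun m _ _ => (hy m).le)
        have hej := hin' ⟨j, hjn⟩ hjL
        simp only [Fin.val_mk] at hej
        linarith
    linarith
end
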